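/- arXiv:2308.12070 — 3 statements merged into one kernel-verified Lean document; each statement's English description precedes it below -/
import Mathlib

section
/- Let F ∈ B(A) have closed image. Then F is upper semi-Fredholm with respect to the ideal F of finite type elements if and only if the orthogonal projection onto ker F belongs to F. -/
variable {A : Type*}

/-- An orthogonal projection in a C*-algebra. -/
def IsProjectionElem [CStarAlgebra A] (p : A) : Prop := IsSelfAdjoint p ∧ p * p = p

/-- Murray–von Neumann equivalence of projections: `p ∼ q`. -/
def MvNEquiv [CStarAlgebra A] (p q : A) : Prop := ∃ v : A, v * star v = p ∧ star v * v = q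

/-- Murray–von Neumann subequivalence `p ⪯ q`: `p` is equivalent to a
subprojection of `q`. -/
def MvNSubEquiv [CStarAlgebra A] (p q : A) : Prop :=
  ∃ p' : A, IsProjectionElem p' ∧ p' * q = p' ∧ q * p' = p' ∧ MvNEquiv p p'

/-- `a` is invertible up to the pair of projections `(p, q)`. -/
def InvertibleUpTo [CStarAlgebra A] (a p q : A) : Prop :=
  ∃ b : A, (1 - q) * a * (1 - p) * b = 1 - q ∧ b * ((1 - q) * a * (1 - p)) = 1 - p

/-- An ideal of finite type elements in a unital C*-algebra `A`
(Kečkić–Lazović): a selfadjoint (two-sided, complex-linear) ideal possessing an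
approximate unit of projections, and such that for any two projections `p, q`
in the ideal there is `v` with `v v* = q` and `v* v ⊥ p`. -/
structure FiniteTypeIdeal (A : Type*) [CStarAlgebra A] where
  carrier : Set A
  zero_mem : (0 : A) ∈ carrier
  add_mem : ∀ {a b : A}, a ∈ carrier → b ∈ carrier → a + b ∈ carrier
  smul_mem : ∀ (c : ℂ) {a : A}, a ∈ carrier → c • a ∈ carrier
  mul_mem_left : ∀ (a : A) {b : A}, b ∈ carrier → a * b ∈ carrier
  mul_mem_right : ∀ (a : A) {b : A}, b ∈ carrier → b * a ∈ carrier
  star_mem : ∀ {a : A}, a ∈ carrier → star a ∈ carrier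
  approx_unit : ∀ {a : A}, a ∈ carrier → ∀ ε : ℝ, 0 < ε →
    ∃ p ∈ carrier, IsProjectionElem p ∧ ‖a * p - a‖ < ε ∧ ‖p * a - a‖ < ε
  exchange : ∀ {p q : A}, p ∈ carrier → q ∈ carrier →
    IsProjectionElem p → IsProjectionElem q →
    ∃ v : A, v * star v = q ∧ IsProjectionElem (star v * v + p)

variable [CStarAlgebra A]

/-- Upper semi-Fredholm type elements `KΦ₊(A)`. -/
def UpperSemiFredholm (F : FiniteTypeIdeal A) (a : A) : Prop :=
  ∃ p q : A, IsProjectionElem p ∧ IsProjectionElem q ∧ p ∈ F.carrier ∧ InvertibleUpTo a p q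

/-- Lower semi-Fredholm type elements `KΦ₋(A)`. -/
def LowerSemiFredholm (F : FiniteTypeIdeal A) (a : A) : Prop :=
  ∃ p q : A, IsProjectionElem p ∧ IsProjectionElem q ∧ q ∈ F.carrier ∧ InvertibleUpTo a p q

/-- Fredholm type elements `KΦ(A)`. -/
def FredholmType (F : FiniteTypeIdeal A) (a : A) : Prop :=
  ∃ p q : A, IsProjectionElem p ∧ IsProjectionElem q ∧ p ∈ F.carrier ∧ q ∈ F.carrier ∧
    InvertibleUpTo a p q

/-- Upper semi-Weyl type elements `KΦ₊⁻(A)`. -/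
def UpperSemiWeyl (F : FiniteTypeIdeal A) (a : A) : Prop :=
  ∃ p q : A, IsProjectionElem p ∧ IsProjectionElem q ∧ p ∈ F.carrier ∧ MvNSubEquiv p q ∧
    InvertibleUpTo a p q

/-- Lower semi-Weyl type elements `KΦ₋⁺(A)`. -/
def LowerSemiWeyl (F : FiniteTypeIdeal A) (a : A) : Prop :=
  ∃ p q : A, IsProjectionElem p ∧ IsProjectionElem q ∧ q ∈ F.carrier ∧ MvNSubEquiv q p ∧
    InvertibleUpTo a p q

/-- Weyl type elements `KΦ₀(A)`. -/
def WeylType (F : FiniteTypeIdeal A) (a : A) : Prop :=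
  ∃ p q : A, IsProjectionElem p ∧ IsProjectionElem q ∧ p ∈ F.carrier ∧ q ∈ F.carrier ∧
    MvNEquiv p q ∧ InvertibleUpTo a p q

/-- The orthogonal complement of a subset of `A`, viewed as a Hilbert
`A`-module over itself with inner product `⟪x, y⟫ = x* y`. -/
def OrthoComplement (S : Set A) : Set A := {x : A | ∀ n ∈ S, star n * x = 0}

/-- A subset (submodule) of `A` is orthogonally complementable if every element
of `A` decomposes as a sum of an element of `S` and an element of `S^⊥`. -/
def IsOrthoComplementable (S : Set A) : Prop :=
  ∀ x : A, ∃ n ∈ S, ∃ m ∈ OrthoComplement S, x = n + m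

/-- A closed submodule `N` of `A` is (topologically) complementable if there is
a closed submodule `L` with `N ⊓ L = 0` and `N + L = A`. -/
def IsComplementable (N : Submodule Aᵐᵒᵖ A) : Prop :=
  ∃ L : Submodule Aᵐᵒᵖ A, IsClosed (L : Set A) ∧ N ⊓ L = ⊥ ∧ N ⊔ L = ⊤

/-- An orthogonal projection in `B(A)`: an idempotent which is self-adjoint
with respect to the `A`-valued inner product. -/
def IsOrthogonalProjectionOp (P : A →L[Aᵐᵒᵖ] A) : Prop :=
  P * P = P ∧ ∀ x y : A, star (P x) * y = star x * P y

/-- Invertibility of `F ∈ B(A)` up to a pair of projections `(P, Q)`. -/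
def OpInvertibleUpTo (F P Q : A →L[Aᵐᵒᵖ] A) : Prop :=
  ∃ D : A →L[Aᵐᵒᵖ] A,
    (1 - Q) * F * (1 - P) * D = 1 - Q ∧ D * ((1 - Q) * F * (1 - P)) = 1 - P

/-! If `a` is invertible up to `(p', q)` with `p'` in the ideal, a left inverse `b` of the
compression gives `t = b (1 - q) a` with `1 - t = (1 - t) p'` in the ideal, and `p = (1 - t) p`
because `a p = 0`.

Conversely, closedness of the range of `x ↦ a x` bounds `‖(1 - p) x‖` by `‖a x‖` (open mapping
theorem), which makes `d = a* a + p` bounded below as a left multiplier. A self-adjoint element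
that is not invertible has approximate kernel vectors given by functional calculus, so `d` is
invertible, and `b = d⁻¹ a*`, `q = 1 - a d⁻¹ a*` exhibit `a` as invertible up to `(p, q)`. -/

theorem ContinuousLinearMap.exists_preimage_norm_le_of_isClosed_range
    {𝕜 E F : Type*} [NontriviallyNormedField 𝕜] [NormedAddCommGroup E] [NormedSpace 𝕜 E]
    [CompleteSpace E] [NormedAddCommGroup F] [NormedSpace 𝕜 F] [CompleteSpace F] (f : E →L[𝕜] F)
    (hf : IsClosed (Set.range f)) : ∃ C > 0, ∀ x, ∃ y, f y = f x ∧ ‖y‖ ≤ C * ‖f x‖ := by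
  have : CompleteSpace f.range := hf.completeSpace_coe
  obtain ⟨C, hC, hpre⟩ := (f.rangeRestrict).exists_preimage_norm_le f.surjective_rangeRestrict
  exact ⟨C, hC, fun x ↦ (hpre (f.rangeRestrict x)).imp fun y hy ↦
    ⟨congrArg Subtype.val hy.1, hy.2⟩⟩

theorem exists_norm_one_sub_mul_le_of_isClosed_range {R : Type*} [NormedRing R]
    [NormedAlgebra ℂ R] [CompleteSpace R] {a p : R} (hclosed : IsClosed {x : R | ∃ y, a * y = x})
    (hker : ∀ x, a * x = 0 → p * x = x) : ∃ k : ℝ, ∀ x, ‖(1 - p) * x‖ ≤ k * ‖a * x‖ := by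
  obtain ⟨C, -, hC⟩ :=
    (ContinuousLinearMap.mul ℂ R a).exists_preimage_norm_le_of_isClosed_range hclosed
  refine ⟨‖1 - p‖ * C, fun x ↦ ?_⟩
  obtain ⟨y, hy, hyx⟩ := hC x
  have hy : a * y = a * x := hy
  have hxy : (1 - p) * x = (1 - p) * y := by
    have := hker (x - y) (by rw [mul_sub, hy, sub_self])
    rw [← sub_eq_zero, ← mul_sub, sub_mul, one_mul, this, sub_self]
  calc ‖(1 - p) * x‖ = ‖(1 - p) * y‖ := by rw [hxy]
    _ ≤ ‖1 - p‖ * ‖y‖ := norm_mul_le _ _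
    _ ≤ ‖1 - p‖ * C * ‖a * x‖ := by
        rw [mul_assoc]; exact mul_le_mul_of_nonneg_left hyx (norm_nonneg _)

theorem CStarRing.norm_mul_self_le_norm_star_mul_self_add (y z : A) :
    ‖y‖ * ‖y‖ ≤ ‖star y * y + star z * z‖ := by
  let _ := CStarAlgebra.spectralOrder A
  have _ := CStarAlgebra.spectralOrderedRing A
  rw [← CStarRing.norm_star_mul_self]
  exact CStarAlgebra.norm_le_norm_of_nonneg_of_le (star_mul_self_nonneg y)
    (le_add_of_nonneg_right (star_mul_self_nonneg z))

theorem IsSelfAdjoint.isUnit_of_norm_le_mul_norm_mul {d : A} (hd : IsSelfAdjoint d) {c : ℝ}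
    (hc : ∀ x : A, ‖x‖ ≤ c * ‖d * x‖) : IsUnit d := by
  by_contra hunit
  have h0 : (0 : ℝ) ∈ spectrum ℝ d := (spectrum.zero_mem_iff ℝ).mpr hunit
  set δ : ℝ := 1 / (2 * (|c| + 1))
  have hδ : 0 < δ := by positivity
  have hcδ : c * δ < 1 := by
    rw [← div_eq_mul_one_div, div_lt_one (by positivity)]
    linarith [le_abs_self c, abs_nonneg c]
  set f : ℝ → ℝ := fun t ↦ max 0 (1 - |t| / δ)
  have hf : Continuous f := by fun_prop
  have hf_le : ∀ t, |t * f t| ≤ δ := by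
    intro t
    rcases le_or_gt δ |t| with ht | ht
    · have : 1 - |t| / δ ≤ 0 := by rw [sub_nonpos, le_div_iff₀ hδ]; linarith
      simp [f, max_eq_left this, hδ.le]
    · rw [abs_mul, abs_of_nonneg (le_max_left 0 _ : 0 ≤ f t)]
      have : f t ≤ 1 := max_le zero_le_one (by linarith [div_nonneg (abs_nonneg t) hδ.le])
      nlinarith [le_max_left 0 (1 - |t| / δ), abs_nonneg t]
  have hx : 1 ≤ ‖cfc f d‖ := by
    simpa [f] using norm_apply_le_norm_cfc f d h0
  have hdx : ‖d * cfc f d‖ ≤ δ := by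
    have hmul : cfc (fun t ↦ t * f t) d = d * cfc f d := by
      rw [cfc_mul (fun t ↦ t) f d, cfc_id' ℝ d]
    rw [← hmul]
    exact norm_cfc_le hδ.le fun t _ ↦ hf_le t
  have hle := hx.trans (hc (cfc f d))
  have hc0 : 0 < c := pos_of_mul_pos_left (one_pos.trans_le hle) (norm_nonneg _)
  nlinarith [mul_le_mul_of_nonneg_left hdx hc0.le]

theorem norm_le_mul_norm_star_mul_self_add_mul {a p : A} (hp : IsProjectionElem p) {k : ℝ}
    (hk : ∀ x, ‖(1 - p) * x‖ ≤ k * ‖a * x‖) (x : A) :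
    ‖x‖ ≤ 2 * (1 + k ^ 2) * ‖(star a * a + p) * x‖ := by
  set D := ‖(star a * a + p) * x‖
  have hquad : star x * ((star a * a + p) * x) =
      star (a * x) * (a * x) + star (p * x) * (p * x) := by
    simp only [star_mul, hp.1.star_eq, mul_add, add_mul, mul_assoc]
    rw [← mul_assoc p p x, hp.2]
  have hnorm : ‖star (a * x) * (a * x) + star (p * x) * (p * x)‖ ≤ ‖x‖ * D := by
    rw [← hquad]
    exact (norm_mul_le _ _).trans_eq (by rw [norm_star])
  have hax := (CStarRing.norm_mul_self_le_norm_star_mul_self_add (a * x) (p * x)).trans hnorm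
  have hpx := (CStarRing.norm_mul_self_le_norm_star_mul_self_add (p * x) (a * x)).trans
    ((add_comm (star (p * x) * (p * x)) _).symm ▸ hnorm)
  have hsplit : ‖x‖ ≤ ‖p * x‖ + k * ‖a * x‖ :=
    calc ‖x‖ = ‖p * x + (1 - p) * x‖ := by rw [← add_mul, add_sub_cancel, one_mul]
      _ ≤ ‖p * x‖ + k * ‖a * x‖ := (norm_add_le _ _).trans (add_le_add le_rfl (hk x))
  rcases (norm_nonneg x).eq_or_lt with hx | hx
  · rw [← hx]; positivity
  · refine le_of_mul_le_mul_left ?_ hx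
    nlinarith [sq_nonneg (‖p * x‖ - k * ‖a * x‖), norm_nonneg (p * x)]

theorem exists_isSelfAdjoint_mul_star_mul_self_eq {a p : A} (hp : IsProjectionElem p)
    (hap : a * p = 0) (hunit : IsUnit (star a * a + p)) :
    ∃ e : A, IsSelfAdjoint e ∧ e * (star a * a) = 1 - p := by
  set d := star a * a + p
  have hd : IsSelfAdjoint d := (IsSelfAdjoint.star_mul_self a).add hp.1
  have hdp : d * p = p := by simp only [d, add_mul, mul_assoc, hap, mul_zero, zero_add, hp.2]
  refine ⟨Ring.inverse d, hd.ringInverse, ?_⟩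
  have hsub : star a * a = d - p := by simp only [d, add_sub_cancel_right]
  have hep : Ring.inverse d * p = p :=
    calc Ring.inverse d * p = Ring.inverse d * d * p := by rw [mul_assoc, hdp]
      _ = p := by rw [Ring.inverse_mul_cancel d hunit, one_mul]
  rw [hsub, mul_sub, Ring.inverse_mul_cancel d hunit, hep]

theorem IsProjectionElem.one_sub {p : A} (hp : IsProjectionElem p) : IsProjectionElem (1 - p) :=
  ⟨.sub (.one A) hp.1, by rw [sub_mul, one_mul, mul_sub, mul_one, hp.2, sub_self, sub_zero]⟩

theorem invertibleUpTo_one_sub_mul_mul_star {a e p : A} (hp : IsProjectionElem p)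
    (hap : a * p = 0) (he : IsSelfAdjoint e) (hea : e * (star a * a) = 1 - p) :
    IsProjectionElem (1 - a * e * star a) ∧ InvertibleUpTo a p (1 - a * e * star a) := by
  have hae : star a * a * e = 1 - p := by
    simpa [he.star_eq, hp.1.star_eq, mul_assoc] using congrArg star hea
  have hpa : (1 - p) * star a = star a := by
    rw [sub_mul, one_mul, ← hp.1.star_eq, ← star_mul, hap, star_zero, sub_zero]
  have hap' : a * (1 - p) = a := by rw [mul_sub, mul_one, hap, sub_zero]
  set r := a * e * star a
  have hr : r * r = r :=
    calc r * r = a * e * ((star a * a * e) * star a) := by simp only [r, mul_assoc]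
      _ = r := by rw [hae, hpa]
  have hr' : IsSelfAdjoint r := by
    simp only [r, IsSelfAdjoint, star_mul, star_star, he.star_eq, mul_assoc]
  refine ⟨IsProjectionElem.one_sub ⟨hr', hr⟩, e * star a, ?_, ?_⟩
  · calc (1 - (1 - r)) * a * (1 - p) * (e * star a) = r * (a * (1 - p)) * e * star a := by
          simp only [sub_sub_cancel, mul_assoc]
      _ = r * r := by rw [hap']; simp only [r, mul_assoc]
      _ = 1 - (1 - r) := by rw [hr, sub_sub_cancel]
  · calc e * star a * ((1 - (1 - r)) * a * (1 - p)) = (e * (star a * a)) * (e * (star a * a)) := by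
          simp only [sub_sub_cancel, hap', r, mul_assoc]
      _ = 1 - p := by rw [hea, hp.one_sub.2]

theorem FiniteTypeIdeal.mem_of_mul_eq_zero_of_invertibleUpTo (F : FiniteTypeIdeal A)
    {a p p' q : A} (hinv : InvertibleUpTo a p' q) (hp' : p' ∈ F.carrier) (hap : a * p = 0) :
    p ∈ F.carrier := by
  obtain ⟨b, -, hb⟩ := hinv
  set t := b * ((1 - q) * a)
  have ht : t * (1 - p') = 1 - p' := by simpa only [t, mul_assoc] using hb
  have htp' : t * p' = t - (1 - p') := by rw [← ht, mul_sub, mul_one]; abel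
  have hmem : (1 - t) * p' = 1 - t := by rw [sub_mul, one_mul, htp']; abel
  have htp : t * p = 0 := by simp only [t, mul_assoc, hap, mul_zero]
  have hp : p = (1 - t) * p' * p := by rw [hmem, sub_mul, one_mul, htp, sub_zero]
  rw [hp]
  exact F.mul_mem_right p (F.mul_mem_left _ hp')

/-- Lemma `closed` (a): if `F ∈ B(A)` (here realized as left multiplication by
`a ∈ A`) has closed image, then `F` is upper semi-Fredholm with respect to the
ideal `F` of finite type elements iff the orthogonal projection onto `ker F`
belongs to the ideal. -/
theorem upperSemiFredholm_iff_ker_projection_finite (F : FiniteTypeIdeal A) (a p : A)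
    (hclosed : IsClosed {x : A | ∃ y : A, a * y = x})
    (hp : IsProjectionElem p)
    (hker : {x : A | p * x = x} = {x : A | a * x = 0}) :
    UpperSemiFredholm F a ↔ p ∈ F.carrier := by
  have hap : a * p = 0 := (Set.ext_iff.mp hker p).mp hp.2
  constructor
  · rintro ⟨p', q, -, -, hp'F, hinv⟩
    exact F.mem_of_mul_eq_zero_of_invertibleUpTo hinv hp'F hap
  · intro hpF
    obtain ⟨k, hk⟩ := exists_norm_one_sub_mul_le_of_isClosed_range hclosed
      fun x hx ↦ (Set.ext_iff.mp hker x).mpr hx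
    have hunit : IsUnit (star a * a + p) :=
      ((IsSelfAdjoint.star_mul_self a).add hp.1).isUnit_of_norm_le_mul_norm_mul
        (norm_le_mul_norm_star_mul_self_add_mul hp hk)
    obtain ⟨e, he, hea⟩ := exists_isSelfAdjoint_mul_star_mul_self_eq hp hap hunit
    obtain ⟨hq, hinv⟩ := invertibleUpTo_one_sub_mul_mul_star hp hap he hea
    exact ⟨p, _, hp, hq, hpF, hinv⟩
end

section
/- Let M and N be closed, complementable submodules of A. Then M is isomorphic (as a Hilbert A-module) to a closed submodule of N if and only if P_M ⪯ P_N, i.e. there exists a projection p' ≤ P_N with P_M Murray–von Neumann equivalent to p'. -/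
variable {A : Type*}

variable [CStarAlgebra A]

/-- `M` is isomorphic, as a Hilbert `A`-module, to a closed submodule of `N`:
there is a closed submodule `N' ≤ N` and a bounded `A`-linear map carrying `M`
onto `N'` which is bounded below on `M` (hence a topological module
isomorphism of `M` onto `N'`). -/
def IsomorphicToClosedSubmoduleOf (M N : Submodule Aᵐᵒᵖ A) : Prop :=
  ∃ N' : Submodule Aᵐᵒᵖ A, IsClosed (N' : Set A) ∧ N' ≤ N ∧
    ∃ T : A →L[Aᵐᵒᵖ] A, ⇑T '' (M : Set A) = (N' : Set A) ∧
      ∃ c : ℝ, 0 < c ∧ ∀ x ∈ M, c * ‖x‖ ≤ ‖T x‖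

/-!
Every bounded `A`-linear map `T` on `A` is left multiplication by `T 1`. So if `T` maps `M = pA`
isomorphically into `N = qA`, then `s = T 1 * p` satisfies `q s = s = s p` and `‖s x‖ ≥ c ‖x‖` on
`pA`. Then `‖s* s x‖ ≥ c² ‖x‖` on `pA`, so `b = s* s + (1 - p)` is bounded below on all of `A`;
a selfadjoint element bounded below has no `0` in its spectrum, so `b` is positive and invertible,
and `v = s b^(-1/2)` satisfies `v* v = p`, `q v = v`: thus `p ∼ v v* ≤ q`.
Conversely, if `v v* = p` and `v* v = p' ≤ q`, left multiplication by `v*` maps `pA` isometrically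
onto the closed submodule `p'A ≤ N`.
-/

noncomputable def mulLeftCLM (a : A) : A →L[Aᵐᵒᵖ] A :=
  ⟨LinearMap.mulLeft Aᵐᵒᵖ a, continuous_const_mul a⟩

@[simp] lemma mulLeftCLM_apply (a x : A) : mulLeftCLM a x = a * x := rfl

lemma ContinuousLinearMap.apply_eq_apply_one_mul (T : A →L[Aᵐᵒᵖ] A) (x : A) :
    T x = T 1 * x := by
  simpa using T.map_smul (MulOpposite.op x) 1

lemma IsProjectionElem.isStarProjection {p : A} (hp : IsProjectionElem p) :
    IsStarProjection p :=
  ⟨hp.2, hp.1⟩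

lemma IsStarProjection.norm_mul_le {p : A} (hp : IsStarProjection p) (x : A) :
    ‖p * x‖ ≤ ‖x‖ :=
  (_root_.norm_mul_le p x).trans (mul_le_of_le_one_left (norm_nonneg x) hp.norm_le)

lemma IsSelfAdjoint.isUnit_of_mul_norm_le {b : A} (hb : IsSelfAdjoint b) {c : ℝ} (hc : 0 < c)
    (h : ∀ x, c * ‖x‖ ≤ ‖b * x‖) : IsUnit b := by
  nontriviality A
  rw [← spectrum.zero_notMem_iff ℝ]
  intro h0
  -- a bump `f` at `0 ∈ σ(b)`: `‖f(b)‖ ≥ f 0 = c`, while `‖b f(b)‖ ≤ sup |t f t| ≤ c² / 2`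
  set f : ℝ → ℝ := fun t => max 0 (c - 2 * |t|)
  have hlow : c ≤ ‖cfc f b‖ := by
    simpa [f, max_eq_right hc.le, abs_of_pos hc] using norm_apply_le_norm_cfc f b h0
  have hup : ‖b * cfc f b‖ ≤ c * c / 2 := by
    nth_rw 1 [← cfc_id' ℝ b]
    rw [← cfc_mul (fun t => t) f b]
    refine norm_cfc_le (by positivity) fun t _ => ?_
    rw [Real.norm_eq_abs, abs_mul, abs_of_nonneg (le_max_left 0 (c - 2 * |t|))]
    rcases max_cases 0 (c - 2 * |t|) with ⟨hm, -⟩ | ⟨hm, hct⟩ <;> rw [hm]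
    · simp only [mul_zero]; positivity
    · nlinarith [abs_nonneg t]
  nlinarith [h (cfc f b)]

lemma sq_mul_norm_le_norm_star_mul_self_mul {s y : A} {c : ℝ} (hc : 0 ≤ c)
    (h : c * ‖y‖ ≤ ‖s * y‖) : c ^ 2 * ‖y‖ ≤ ‖star s * s * y‖ := by
  have hnorm_sq : ‖s * y‖ ^ 2 ≤ ‖y‖ * ‖star s * s * y‖ := by
    calc ‖s * y‖ ^ 2 = ‖star y * (star s * s * y)‖ := by
          rw [sq, ← CStarRing.norm_star_mul_self, star_mul, mul_assoc, mul_assoc]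
      _ ≤ ‖y‖ * ‖star s * s * y‖ := by
          simpa only [norm_star] using _root_.norm_mul_le (star y) (star s * s * y)
  rcases (norm_nonneg y).eq_or_lt with hy | hy
  · simp [← hy]
  · refine le_of_mul_le_mul_left ?_ hy
    nlinarith [mul_le_mul h h (by positivity) (norm_nonneg _)]

lemma IsStarProjection.div_mul_norm_le_norm_add_one_sub_mul {p a : A} (hp : IsStarProjection p)
    (hpa : p * a = a) (hap : a * p = a) {c : ℝ} (hc : 0 < c)
    (h : ∀ y, p * y = y → c * ‖y‖ ≤ ‖a * y‖) (x : A) :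
    c / (1 + c) * ‖x‖ ≤ ‖(a + (1 - p)) * x‖ := by
  set w := (a + (1 - p)) * x
  have hpw : p * w = a * (p * x) := by
    simp only [w, mul_add, mul_sub, ← mul_assoc, hpa, hap, hp.isIdempotentElem.eq, mul_one,
      sub_self, add_zero]
  have hpw' : (1 - p) * w = (1 - p) * x := by
    simp only [w, sub_mul, mul_add, one_mul, ← mul_assoc, hpa, hp.isIdempotentElem.eq, mul_sub,
      mul_one, sub_self, zero_add, sub_zero]
  have hpx : c * ‖p * x‖ ≤ ‖w‖ :=
    (h _ (by rw [← mul_assoc, hp.isIdempotentElem.eq])).trans (hpw ▸ hp.norm_mul_le w)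
  have hpx' : ‖(1 - p) * x‖ ≤ ‖w‖ := hpw' ▸ hp.one_sub.norm_mul_le w
  have hx : ‖x‖ ≤ ‖p * x‖ + ‖(1 - p) * x‖ := by
    simpa [sub_mul] using norm_add_le (p * x) ((1 - p) * x)
  rw [div_mul_eq_mul_div, div_le_iff₀ (by positivity)]
  nlinarith

lemma mvnSubEquiv_of_star_mul_self_eq {p q v : A} (hq : IsSelfAdjoint q) (hv : star v * v = p)
    (hvp : v * p = v) (hqv : q * v = v) : MvNSubEquiv p q := by
  have hqp' : q * (v * star v) = v * star v := by rw [← mul_assoc, hqv]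
  refine ⟨v * star v, ⟨.mul_star_self v, ?_⟩, ?_, hqp', star v, by rw [star_star, hv],
    by rw [star_star]⟩
  · rw [mul_assoc, ← mul_assoc (star v), hv, ← mul_assoc, hvp]
  · simpa only [star_mul, star_star, hq.star_eq] using congrArg star hqp'

section SpectralOrder

attribute [local instance] CStarAlgebra.spectralOrder CStarAlgebra.spectralOrderedRing

lemma mvnSubEquiv_of_mul_norm_le {p q s : A} (hp : IsStarProjection p) (hq : IsSelfAdjoint q)
    (hsp : s * p = s) (hqs : q * s = s) {c : ℝ} (hc : 0 < c)
    (h : ∀ x, p * x = x → c * ‖x‖ ≤ ‖s * x‖) : MvNSubEquiv p q := by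
  have hps : p * star s = star s := by
    simpa only [star_mul, hp.isSelfAdjoint.star_eq] using congrArg star hsp
  set b := star s * s + (1 - p)
  have hbp : b * p = star s * s := by
    simp only [b, add_mul, sub_mul, one_mul, mul_assoc, hsp, hp.isIdempotentElem.eq, sub_self,
      add_zero]
  have hpb : p * b = star s * s := by
    simp only [b, mul_add, mul_sub, mul_one, ← mul_assoc, hps, hp.isIdempotentElem.eq, sub_self,
      add_zero]
  have hb : IsStrictlyPositive b := by
    refine IsUnit.isStrictlyPositive ?_ (add_nonneg (star_mul_self_nonneg s) hp.one_sub.nonneg)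
    refine ((IsSelfAdjoint.star_mul_self s).add hp.one_sub.isSelfAdjoint).isUnit_of_mul_norm_le
      (c := c ^ 2 / (1 + c ^ 2)) (by positivity) ?_
    exact hp.div_mul_norm_le_norm_add_one_sub_mul (by rw [← mul_assoc, hps])
      (by rw [mul_assoc, hsp]) (by positivity)
      fun y hy => sq_mul_norm_le_norm_star_mul_self_mul hc.le (h y hy)
  set r := b ^ (-(1 / 2) : ℝ)
  have hrp : Commute r p := by
    simp only [r, CFC.rpow_def]
    exact Commute.cfc_nnreal (hpb.trans hbp.symm).symm _
  have hr : IsSelfAdjoint r := .of_nonneg CFC.rpow_nonneg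
  refine mvnSubEquiv_of_star_mul_self_eq hq (v := s * r) ?_ ?_ ?_
  · calc star (s * r) * (s * r) = r * (b * p) * r := by
          rw [hbp, star_mul, hr.star_eq]; simp only [mul_assoc]
      _ = r * b * r * p := by simp only [mul_assoc, hrp.eq]
      _ = p := by rw [CFC.conjugate_rpow_neg_one_half b, one_mul]
  · rw [mul_assoc, hrp.eq, ← mul_assoc, hsp]
  · rw [← mul_assoc, hqs]

end SpectralOrder

lemma image_mulLeftCLM_star {p p' v : A} (hvv : v * star v = p) (hvv' : star v * v = p') :
    mulLeftCLM (star v) '' {x | p * x = x} = {y | p' * y = y} := by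
  ext y
  constructor
  · rintro ⟨x, hx, rfl⟩
    change p * x = x at hx
    change p' * (star v * x) = star v * x
    rw [← hvv', mul_assoc, ← mul_assoc v, hvv, hx]
  · intro hy
    change p' * y = y at hy
    refine ⟨v * y, ?_, ?_⟩
    · change p * (v * y) = v * y
      rw [← hvv, mul_assoc, ← mul_assoc (star v), hvv', hy]
    · rw [mulLeftCLM_apply, ← mul_assoc, hvv', hy]

lemma norm_le_norm_star_mul {p p' v : A} (hp' : IsStarProjection p') (hvv : v * star v = p)
    (hvv' : star v * v = p') {x : A} (hx : p * x = x) : ‖x‖ ≤ ‖star v * x‖ := by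
  have hv : ‖v‖ ≤ 1 := by
    have : ‖v‖ * ‖v‖ ≤ 1 := by rw [← CStarRing.norm_star_mul_self, hvv']; exact hp'.norm_le
    nlinarith [norm_nonneg v]
  calc ‖x‖ = ‖v * (star v * x)‖ := by rw [← mul_assoc, hvv, hx]
    _ ≤ ‖star v * x‖ := (_root_.norm_mul_le _ _).trans (mul_le_of_le_one_left (norm_nonneg _) hv)

theorem isomorphicToSubmodule_iff_subEquiv_general (M N : Submodule Aᵐᵒᵖ A)
    (p q : A) (hp : IsProjectionElem p) (hq : IsProjectionElem q)
    (hpr : {x : A | p * x = x} = (M : Set A))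
    (hqr : {x : A | q * x = x} = (N : Set A)) :
    IsomorphicToClosedSubmoduleOf M N ↔ MvNSubEquiv p q := by
  have hM (x : A) : x ∈ M ↔ p * x = x := by rw [← SetLike.mem_coe, ← hpr]; rfl
  have hN (x : A) : x ∈ N ↔ q * x = x := by rw [← SetLike.mem_coe, ← hqr]; rfl
  constructor
  · rintro ⟨N', -, hN'N, T, hTM, c, hc, hT⟩
    refine mvnSubEquiv_of_mul_norm_le (s := T 1 * p) hp.isStarProjection hq.1
      (by rw [mul_assoc, hp.2]) ?_ hc fun x hx => ?_
    · rw [← T.apply_eq_apply_one_mul, ← hN]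
      exact hN'N (hTM.subset ⟨p, (hM p).2 hp.2, rfl⟩)
    · rw [mul_assoc, hx, ← T.apply_eq_apply_one_mul]
      exact hT x ((hM x).2 hx)
  · rintro ⟨p', hp', hp'q, hqp', v, hvv, hvv'⟩
    refine ⟨LinearMap.eqLocus (mulLeftCLM p' : A →ₗ[Aᵐᵒᵖ] A) LinearMap.id,
      isClosed_eq (mulLeftCLM p').continuous continuous_id, fun y hy => ?_,
      mulLeftCLM (star v), ?_, 1, one_pos, fun x hx => ?_⟩
    · change p' * y = y at hy
      rw [hN, ← hy, ← mul_assoc, hqp']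
    · rw [← hpr]
      exact image_mulLeftCLM_star hvv hvv'
    · rw [one_mul, mulLeftCLM_apply]
      exact norm_le_norm_star_mul hp'.isStarProjection hvv hvv' ((hM x).1 hx)

/-- Lemma R12 L02: for closed complementable submodules `M, N` of `A` with
orthogonal projections `p = P_M`, `q = P_N`, `M` is isomorphic to a closed
submodule of `N` iff `P_M ⪯ P_N` (Murray–von Neumann subequivalence). -/
theorem isomorphicToSubmodule_iff_subEquiv (M N : Submodule Aᵐᵒᵖ A)
    (hM : IsClosed (M : Set A)) (hN : IsClosed (N : Set A))
    (hMc : IsComplementable M) (hNc : IsComplementable N)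
    (p q : A) (hp : IsProjectionElem p) (hq : IsProjectionElem q)
    (hpr : {x : A | p * x = x} = (M : Set A))
    (hqr : {x : A | q * x = x} = (N : Set A)) :
    IsomorphicToClosedSubmoduleOf M N ↔ MvNSubEquiv p q :=
  isomorphicToSubmodule_iff_subEquiv_general M N p q hp hq hpr hqr
end

section
/- An element a ∈ A is a Weyl type element (a ∈ KΦ₀(A)) if and only if a = b + f for some invertible b ∈ A and some f ∈ F. -/
variable {A : Type*}

variable [CStarAlgebra A]

/-! If `a` is invertible up to `(p, q)` and `v` implements `p ∼ q`, then `a` agrees modulo `F` with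
`(1 - q) a (1 - p) + v*`, which is invertible: it is block diagonal with respect to
`1 = (1 - p) + p` on the right and `1 = (1 - q) + q` on the left, with invertible blocks.
Conversely, write `b + f = b (1 + g)` with `g = b⁻¹ f ∈ F`, and choose a projection `p ∈ F` with
`‖g p - g‖ < 1`. Then `c = b (1 - (g p - g))` is invertible and agrees with `b + f` on `1 - p`.
In the polar decomposition `c = u |c|` the unitary `u` carries `p` to `q = u p u*`, and the corner
`(1 - p) |c| (1 - p)` is invertible in `(1 - p) A (1 - p)` because `|c|` is bounded below. -/

theorem isProjectionElem_iff_isStarProjection {p : A} :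
    IsProjectionElem p ↔ IsStarProjection p :=
  ⟨fun ⟨hsa, hidem⟩ => ⟨hidem, hsa⟩, fun ⟨hidem, hsa⟩ => ⟨hsa, hidem⟩⟩

theorem FiniteTypeIdeal.sub_mem (F : FiniteTypeIdeal A) {x y : A} (hx : x ∈ F.carrier)
    (hy : y ∈ F.carrier) : x - y ∈ F.carrier := by
  simpa [sub_eq_add_neg] using F.add_mem hx (F.smul_mem (-1) hy)

theorem mul_eq_right_of_mul_star_self_eq {v p : A} (hv : v * star v = p) (hp : p * p = p) :
    p * v = v := by
  have hps : star p = p := by rw [← hv, star_mul, star_star]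
  have h1 : v * (star v * p) = p := by rw [← mul_assoc, hv, hp]
  have h2 : p * v * star v = p := by rw [mul_assoc, hv, hp]
  have h3 : p * v * (star v * p) = p := by rw [← mul_assoc, mul_assoc p v, hv, hp, hp]
  have hzero : (v - p * v) * star (v - p * v) = 0 := by
    rw [star_sub, star_mul, hps, sub_mul, mul_sub, mul_sub, hv, h1, h2, h3]
    abel
  exact (sub_eq_zero.mp ((CStarRing.mul_star_self_eq_zero_iff _).mp hzero)).symm

theorem mul_eq_left_of_star_mul_self_eq {v q : A} (hv : star v * v = q) (hq : q * q = q) :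
    v * q = v := by
  have hqv := mul_eq_right_of_mul_star_self_eq (v := star v) (by rwa [star_star]) hq
  have hqs : star q = q := by rw [← hv, star_mul, star_star]
  simpa [star_mul, hqs] using congrArg star hqv

theorem isUnit_add_of_blockDiagonal {R : Type*} [Ring R] {p q t s w v : R}
    (hts : t * s = 1 - q) (hst : s * t = 1 - p) (hwv : w * v = q) (hvw : v * w = p)
    (htv : t * v = 0) (hvt : v * t = 0) (hws : w * s = 0) (hsw : s * w = 0) :
    IsUnit (t + w) :=
  ⟨⟨t + w, s + v, by simp [add_mul, mul_add, hts, htv, hws, hwv],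
    by simp [add_mul, mul_add, hst, hsw, hvt, hvw]⟩, rfl⟩

theorem WeylType.exists_isUnit_add_mem {F : FiniteTypeIdeal A} {a : A} (ha : WeylType F a) :
    ∃ b f : A, IsUnit b ∧ f ∈ F.carrier ∧ a = b + f := by
  obtain ⟨p, q, hp, hq, hpF, hqF, ⟨v, hvp, hvq⟩, c, htc, hct⟩ := ha
  rw [isProjectionElem_iff_isStarProjection] at hp hq
  have hpv : p * v = v := mul_eq_right_of_mul_star_self_eq hvp hp.isIdempotentElem
  have hvq' : v * q = v := mul_eq_left_of_star_mul_self_eq hvq hq.isIdempotentElem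
  have hp₁ := hp.one_sub.isIdempotentElem.eq
  have hq₁ := hq.one_sub.isIdempotentElem.eq
  have hp₁v : (1 - p) * v = 0 := by rw [sub_mul, one_mul, hpv, sub_self]
  have hvq₁ : v * (1 - q) = 0 := by rw [mul_sub, mul_one, hvq', sub_self]
  set t := (1 - q) * a * (1 - p)
  have htp₁ : t * (1 - p) = t := by simp only [t, mul_assoc, hp₁]
  have hq₁t : (1 - q) * t = t := by simp only [t, ← mul_assoc, hq₁]
  have hunit : IsUnit (t + star v) := by
    refine isUnit_add_of_blockDiagonal (s := (1 - p) * c * (1 - q)) (v := v) ?_ ?_ hvq hvp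
      ?_ ?_ ?_ ?_
    · rw [← mul_assoc, ← mul_assoc, htp₁, htc, hq₁]
    · rw [mul_assoc, hq₁t, mul_assoc, hct, hp₁]
    · rw [← htp₁, mul_assoc, hp₁v, mul_zero]
    · rw [← hq₁t, ← mul_assoc, hvq₁, zero_mul]
    · rw [← mul_assoc, ← mul_assoc, ← star_star (1 - p), ← star_mul, star_sub, star_one,
        hp.isSelfAdjoint.star_eq, hp₁v, star_zero, zero_mul, zero_mul]
    · rw [mul_assoc, ← star_star (1 - q), ← star_mul, star_sub, star_one,
        hq.isSelfAdjoint.star_eq, hvq₁, star_zero, mul_zero]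
  refine ⟨t + star v, q * a + (1 - q) * a * p - star v, hunit, ?_, by simp only [t]; noncomm_ring⟩
  refine F.sub_mem (F.add_mem (F.mul_mem_right a hqF) (F.mul_mem_left _ hpF)) ?_
  exact F.star_mem (hpv ▸ F.mul_mem_right v hpF)

theorem FiniteTypeIdeal.exists_mul_one_sub_eq_isUnit (F : FiniteTypeIdeal A) {b f : A}
    (hb : IsUnit b) (hf : f ∈ F.carrier) :
    ∃ p, IsStarProjection p ∧ p ∈ F.carrier ∧ ∃ c, IsUnit c ∧ (b + f) * (1 - p) = c * (1 - p) := by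
  obtain ⟨B, rfl⟩ := hb
  set g := ↑B⁻¹ * f
  have hfg : f = B * g := by rw [← mul_assoc, Units.mul_inv, one_mul]
  obtain ⟨p, hpF, hp, hgp, -⟩ := F.approx_unit (F.mul_mem_left _ hf) 1 one_pos
  rw [isProjectionElem_iff_isStarProjection] at hp
  refine ⟨p, hp, hpF, B * (1 - (g * p - g)), B.isUnit.mul (isUnit_one_sub_of_norm_lt_one hgp), ?_⟩
  have hperturb : (1 - (g * p - g)) * (1 - p) = (1 + g) * (1 - p) := by
    rw [← sub_eq_zero]
    calc _ = -(g * (p * (1 - p))) := by noncomm_ring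
      _ = 0 := by rw [hp.mul_one_sub_self, mul_zero, neg_zero]
  rw [mul_assoc, hperturb, hfg]
  noncomm_ring

theorem InvertibleUpTo.of_mul_one_sub_eq {a c p q : A} (h : InvertibleUpTo c p q)
    (hac : a * (1 - p) = c * (1 - p)) : InvertibleUpTo a p q := by
  simpa only [InvertibleUpTo, mul_assoc, hac] using h

theorem invertibleUpTo_self_of_isUnit_corner_add {h p : A} (hp : IsStarProjection p)
    (hY : IsUnit ((1 - p) * h * (1 - p) + p)) : InvertibleUpTo h p p := by
  obtain ⟨Y, hY⟩ := hY
  have hpY : p * Y = p := by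
    rw [hY, mul_add, ← mul_assoc, ← mul_assoc, hp.mul_one_sub_self, zero_mul, zero_mul,
      zero_add, hp.isIdempotentElem.eq]
  have hYp : Y * p = p := by
    rw [hY, add_mul, mul_assoc, hp.one_sub_mul_self, mul_zero, zero_add,
      hp.isIdempotentElem.eq]
  have hpYinv : p * ↑Y⁻¹ = p := by rw [Units.mul_inv_eq_iff_eq_mul, hpY]
  have hYinvp : ↑Y⁻¹ * p = p := by rw [Units.inv_mul_eq_iff_eq_mul, hYp]
  have hcorner : (1 - p) * h * (1 - p) = Y - p := by rw [hY, add_sub_cancel_right]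
  refine ⟨↑Y⁻¹, ?_, ?_⟩
  · rw [hcorner, sub_mul, Units.mul_inv, hpYinv]
  · rw [hcorner, mul_sub, Units.inv_mul, hYinvp]

theorem Unitary.star_mul_self_mul_of_mem {R : Type*} [Monoid R] [StarMul R] {u : R}
    (hu : u ∈ unitary R) (x : R) : star u * (u * x) = x := by
  rw [← mul_assoc, Unitary.star_mul_self_of_mem hu, one_mul]

theorem IsStarProjection.unitary_conj {R : Type*} [Monoid R] [StarMul R] {p u : R}
    (hp : IsStarProjection p) (hu : u ∈ unitary R) : IsStarProjection (u * p * star u) where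
  isIdempotentElem := by
    simp only [IsIdempotentElem, mul_assoc, Unitary.star_mul_self_mul_of_mem hu]
    rw [← mul_assoc p, hp.isIdempotentElem.eq]
  isSelfAdjoint := by
    simpa [mul_assoc] using hp.isSelfAdjoint.conjugate u

theorem mvNEquiv_unitary_conj {p u : A} (hp : IsStarProjection p) (hu : u ∈ unitary A) :
    MvNEquiv p (u * p * star u) := by
  refine ⟨p * star u, ?_, ?_⟩
  · rw [star_mul, star_star, hp.isSelfAdjoint.star_eq, mul_assoc,
      Unitary.star_mul_self_mul_of_mem hu, hp.isIdempotentElem.eq]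
  · rw [star_mul, star_star, hp.isSelfAdjoint.star_eq, mul_assoc, ← mul_assoc p,
      hp.isIdempotentElem.eq, mul_assoc]

theorem InvertibleUpTo.unitary_mul {x p q u : A} (h : InvertibleUpTo x p q)
    (hu : u ∈ unitary A) : InvertibleUpTo (u * x) p (u * q * star u) := by
  obtain ⟨b, hxb, hbx⟩ := h
  have hq : 1 - u * q * star u = u * ((1 - q) * star u) := by
    rw [sub_mul, mul_sub, one_mul, Unitary.mul_star_self_of_mem hu, mul_assoc]
  have hcorner : (1 - u * q * star u) * (u * x) * (1 - p) = u * ((1 - q) * x * (1 - p)) := by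
    rw [hq]
    simp only [mul_assoc, Unitary.star_mul_self_mul_of_mem hu]
  refine ⟨b * star u, ?_, ?_⟩
  · rw [hcorner, hq, ← mul_assoc, mul_assoc u, hxb, mul_assoc]
  · rw [hcorner, mul_assoc, Unitary.star_mul_self_mul_of_mem hu, hbx]

section StarOrderedRing

variable [PartialOrder A] [StarOrderedRing A]

theorem IsStrictlyPositive.corner_add_one_sub {h p : A} (hh : IsStrictlyPositive h)
    (hp : IsStarProjection p) : IsStrictlyPositive (p * h * p + (1 - p)) := by
  nontriviality A
  obtain ⟨r, hr, hrh⟩ := (CFC.exists_pos_algebraMap_le_iff hh.isSelfAdjoint).mpr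
    ((StarOrderedRing.isStrictlyPositive_iff_spectrum_pos h).mp hh)
  set s := min r 1
  have hs : algebraMap ℝ A s ≤ h := (algebraMap_mono A (min_le_left r 1)).trans hrh
  have hsp : s • p ≤ p * h * p := by
    simpa [hp.isSelfAdjoint.star_eq, Algebra.algebraMap_eq_smul_one, hp.isIdempotentElem.eq]
      using star_left_conjugate_le_conjugate hs p
  have hsp₁ : s • (1 - p) ≤ 1 - p := smul_le_of_le_one_left hp.one_sub_nonneg (min_le_right r 1)
  refine (isStrictlyPositive_one.smul (lt_min hr one_pos)).of_le ?_
  simpa [smul_sub] using add_le_add hsp hsp₁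

theorem IsStrictlyPositive.invertibleUpTo {h p : A} (hh : IsStrictlyPositive h)
    (hp : IsStarProjection p) : InvertibleUpTo h p p := by
  refine invertibleUpTo_self_of_isUnit_corner_add hp ?_
  simpa using (hh.corner_add_one_sub hp.one_sub).isUnit

theorem IsUnit.exists_unitary_mul_isStrictlyPositive {c : A} (hc : IsUnit c) :
    ∃ u ∈ unitary A, ∃ h : A, IsStrictlyPositive h ∧ c = u * h := by
  have hh : IsStrictlyPositive (CFC.abs c) :=
    (CStarAlgebra.isStrictlyPositive_iff_eq_star_mul_self.mpr ⟨c, hc, rfl⟩).sqrt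
  set k := Ring.inverse (CFC.abs c)
  have hkh : k * CFC.abs c = 1 := Ring.inverse_mul_cancel _ hh.isUnit
  have hhk : CFC.abs c * k = 1 := Ring.mul_inverse_cancel _ hh.isUnit
  have hu : star (c * k) * (c * k) = 1 := by
    rw [star_mul, hh.ringInverse.isSelfAdjoint.star_eq, mul_assoc, ← mul_assoc (star c),
      ← CFC.abs_mul_abs, mul_assoc, hhk, mul_one, hkh]
  refine ⟨c * k, (hc.mul hh.ringInverse.isUnit).mem_unitary_of_star_mul_self hu, _, hh, ?_⟩
  rw [mul_assoc, hkh, mul_one]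

end StarOrderedRing

theorem WeylType.of_isUnit_add {F : FiniteTypeIdeal A} {b f : A} (hb : IsUnit b)
    (hf : f ∈ F.carrier) : WeylType F (b + f) := by
  let _ : PartialOrder A := CStarAlgebra.spectralOrder A
  have _ : StarOrderedRing A := CStarAlgebra.spectralOrderedRing A
  obtain ⟨p, hp, hpF, c, hc, hbfc⟩ := F.exists_mul_one_sub_eq_isUnit hb hf
  obtain ⟨u, hu, h, hh, rfl⟩ := hc.exists_unitary_mul_isStrictlyPositive
  refine ⟨p, u * p * star u, isProjectionElem_iff_isStarProjection.mpr hp,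
    isProjectionElem_iff_isStarProjection.mpr (hp.unitary_conj hu), hpF,
    F.mul_mem_right _ (F.mul_mem_left u hpF), mvNEquiv_unitary_conj hp hu,
    ((hh.invertibleUpTo hp).unitary_mul hu).of_mul_one_sub_eq hbfc⟩

/-- Proposition 17(3) of [BJMA]: `a` is a Weyl type element iff `a = b + f`
with `b` invertible and `f` of finite type. -/
theorem weylType_iff_invertible_plus_finite (F : FiniteTypeIdeal A) (a : A) :
    WeylType F a ↔ ∃ b f : A, IsUnit b ∧ f ∈ F.carrier ∧ a = b + f := by
  refine ⟨WeylType.exists_isUnit_add_mem, ?_⟩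
  rintro ⟨b, f, hb, hf, rfl⟩
  exact WeylType.of_isUnit_add hb hf
end
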